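/- Let d be a positive integer and let ν be a Borel probability measure on U(d) such that the matrix M := ∫_{U(d)} (C ⊗ C)† · Π^eq · (C ⊗ C) dν(C) satisfies ‖M − (2/(d+1)) · Π^sym‖_op ≤ 1/(d(d+1)). Then for all real numbers ℓ ≥ 0 and r ≥ 0: ℓ · ‖M‖_op + r · ‖M^{T2} − Π^EPR‖_op ≤ (3ℓ + 2r)/(d+1). -/
import Mathlib


open Matrix MeasureTheory
open scoped Kronecker

noncomputable instance {m n : Type*} [Fintype m] [Fintype n] :
    MeasurableSpace (Matrix m n ℂ) := borel _
instance {m n : Type*} [Fintype m] [Fintype n] : BorelSpace (Matrix m n ℂ) := ⟨rfl⟩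

/-- The ℓ²→ℓ² operator norm of a matrix. -/
noncomputable def opNorm {n : Type*} [Fintype n] [DecidableEq n] (M : Matrix n n ℂ) : ℝ :=
  ‖LinearMap.toContinuousLinearMap (Matrix.toEuclideanLin M)‖

/-- `Π^eq = Σ_x |x,x⟩⟨x,x|`. -/
noncomputable def PiEq (d : ℕ) : Matrix (Fin d × Fin d) (Fin d × Fin d) ℂ :=
  Matrix.of fun p q => if p.1 = p.2 ∧ q.1 = q.2 ∧ p.1 = q.1 then 1 else 0

/-- The swap operator `F|x,y⟩ = |y,x⟩`. -/
noncomputable def SwapF (d : ℕ) : Matrix (Fin d × Fin d) (Fin d × Fin d) ℂ :=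
  Matrix.of fun p q => if p.1 = q.2 ∧ p.2 = q.1 then 1 else 0

/-- `Π^sym = (1/2)(I + F)`. -/
noncomputable def PiSym (d : ℕ) : Matrix (Fin d × Fin d) (Fin d × Fin d) ℂ :=
  ((1 : ℂ) / 2) • ((1 : Matrix (Fin d × Fin d) (Fin d × Fin d) ℂ) + SwapF d)

/-- `Π^EPR = |φ⟩⟨φ|` with `|φ⟩ = (1/√d) Σ_x |x,x⟩`. -/
noncomputable def PiEPR (d : ℕ) : Matrix (Fin d × Fin d) (Fin d × Fin d) ℂ :=
  Matrix.of fun p q => if p.1 = p.2 ∧ q.1 = q.2 then 1 / (d : ℂ) else 0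

/-- The partial transpose: `(O^{T2})_{(x,z),(y,w)} = O_{(x,w),(y,z)}`. -/
def ptrans {d : ℕ} (O : Matrix (Fin d × Fin d) (Fin d × Fin d) ℂ) :
    Matrix (Fin d × Fin d) (Fin d × Fin d) ℂ :=
  Matrix.of fun p q => O (p.1, q.2) (q.1, p.2)

section Helpers
open scoped Matrix.Norms.L2Operator

lemma opNorm_eq {n : Type*} [Fintype n] [DecidableEq n] (M : Matrix n n ℂ) :
    opNorm M = ‖M‖ := rfl

noncomputable def frobSq {n : Type*} [Fintype n] (A : Matrix n n ℂ) : ℝ :=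
  ∑ x : n × n, ‖A x.1 x.2‖ ^ 2

lemma frobSq_eq {n : Type*} [Fintype n] (A : Matrix n n ℂ) :
    frobSq A = ∑ i, ∑ j, ‖A i j‖ ^ 2 :=
  Fintype.sum_prod_type _

lemma frobSq_nonneg {n : Type*} [Fintype n] (A : Matrix n n ℂ) : 0 ≤ frobSq A :=
  Finset.sum_nonneg fun _ _ => sq_nonneg _

lemma norm_le_sqrt_frobSq {n : Type*} [Fintype n] [DecidableEq n] (A : Matrix n n ℂ) :
    ‖A‖ ≤ Real.sqrt (frobSq A) := by
  rw [Matrix.l2_opNorm_def]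
  refine ContinuousLinearMap.opNorm_le_bound _ (Real.sqrt_nonneg _) fun v => ?_
  have hw : ∀ i, ‖(toEuclideanLin A v : EuclideanSpace ℂ n) i‖ ^ 2 ≤
      (∑ j, ‖A i j‖ ^ 2) * ‖v‖ ^ 2 := by
    intro i
    have h1 : ‖(toEuclideanLin A v : EuclideanSpace ℂ n) i‖ ≤ ∑ j, ‖A i j‖ * ‖v j‖ := by
      calc ‖(toEuclideanLin A v : EuclideanSpace ℂ n) i‖ = ‖∑ j, A i j * v j‖ := rfl
        _ ≤ ∑ j, ‖A i j * v j‖ := norm_sum_le _ _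
        _ = ∑ j, ‖A i j‖ * ‖v j‖ := by simp [norm_mul]
    have h2 : (∑ j, ‖A i j‖ * ‖v j‖) ^ 2 ≤ (∑ j, ‖A i j‖ ^ 2) * ∑ j, ‖v j‖ ^ 2 :=
      Finset.sum_mul_sq_le_sq_mul_sq _ _ _
    have h3 : (∑ j, ‖v j‖ ^ 2) = ‖v‖ ^ 2 := by
      rw [EuclideanSpace.norm_eq, Real.sq_sqrt (Finset.sum_nonneg fun _ _ => sq_nonneg _)]
    calc ‖(toEuclideanLin A v : EuclideanSpace ℂ n) i‖ ^ 2
        ≤ (∑ j, ‖A i j‖ * ‖v j‖) ^ 2 := by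
          apply sq_le_sq' _ h1
          have := norm_nonneg ((toEuclideanLin A v : EuclideanSpace ℂ n) i)
          nlinarith [Finset.sum_nonneg (fun j (_ : j ∈ Finset.univ) =>
            mul_nonneg (norm_nonneg (A i j)) (norm_nonneg (v j)))]
      _ ≤ (∑ j, ‖A i j‖ ^ 2) * ∑ j, ‖v j‖ ^ 2 := h2
      _ = (∑ j, ‖A i j‖ ^ 2) * ‖v‖ ^ 2 := by rw [h3]
  have hnsq : ‖(LinearMap.toContinuousLinearMap (toEuclideanLin A)) v‖ ^ 2 ≤
      frobSq A * ‖v‖ ^ 2 := by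
    have : ‖(LinearMap.toContinuousLinearMap (toEuclideanLin A)) v‖ ^ 2 =
        ∑ i, ‖(toEuclideanLin A v : EuclideanSpace ℂ n) i‖ ^ 2 := by
      rw [EuclideanSpace.norm_eq, Real.sq_sqrt (Finset.sum_nonneg fun _ _ => sq_nonneg _)]
      rfl
    rw [this, frobSq_eq, Finset.sum_mul]
    exact Finset.sum_le_sum fun i _ => hw i
  calc ‖(LinearMap.toContinuousLinearMap (toEuclideanLin A)) v‖
      = Real.sqrt (‖(LinearMap.toContinuousLinearMap (toEuclideanLin A)) v‖ ^ 2) :=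
        (Real.sqrt_sq (norm_nonneg _)).symm
    _ ≤ Real.sqrt (frobSq A * ‖v‖ ^ 2) := Real.sqrt_le_sqrt hnsq
    _ = Real.sqrt (frobSq A) * ‖v‖ := by
        rw [Real.sqrt_mul (frobSq_nonneg A), Real.sqrt_sq (norm_nonneg _)]

lemma frobSq_le_card_mul {n : Type*} [Fintype n] [DecidableEq n] (A : Matrix n n ℂ) :
    frobSq A ≤ (Fintype.card n : ℝ) * ‖A‖ ^ 2 := by
  have hcol : ∀ j, ∑ i, ‖A i j‖ ^ 2 ≤ ‖A‖ ^ 2 := by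
    intro j
    have h := Matrix.l2_opNorm_mulVec A (EuclideanSpace.single j (1 : ℂ))
    rw [EuclideanSpace.norm_single] at h
    simp only [norm_one, mul_one] at h
    have hv : ((EuclideanSpace.equiv n ℂ).symm
        (A *ᵥ (EuclideanSpace.single j (1 : ℂ))) : EuclideanSpace ℂ n) =
        (EuclideanSpace.equiv n ℂ).symm (fun i => A i j) := by
      congr 1
      ext i
      simp [Matrix.mulVec, dotProduct, EuclideanSpace.single_apply]
    rw [hv] at h
    have hn : ‖((EuclideanSpace.equiv n ℂ).symm (fun i => A i j) : EuclideanSpace ℂ n)‖ =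
        Real.sqrt (∑ i, ‖A i j‖ ^ 2) := by
      rw [EuclideanSpace.norm_eq]
      rfl
    rw [hn] at h
    calc ∑ i, ‖A i j‖ ^ 2 = Real.sqrt (∑ i, ‖A i j‖ ^ 2) ^ 2 := by
          rw [Real.sq_sqrt (Finset.sum_nonneg fun _ _ => sq_nonneg _)]
      _ ≤ ‖A‖ ^ 2 := by
          have h0 : (0:ℝ) ≤ Real.sqrt (∑ i, ‖A i j‖ ^ 2) := Real.sqrt_nonneg _
          nlinarith
  calc frobSq A = ∑ j, ∑ i, ‖A i j‖ ^ 2 := by rw [frobSq_eq]; exact Finset.sum_comm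
    _ ≤ ∑ _j : n, ‖A‖ ^ 2 := Finset.sum_le_sum fun j _ => hcol j
    _ = (Fintype.card n : ℝ) * ‖A‖ ^ 2 := by
        rw [Finset.sum_const, Finset.card_univ, nsmul_eq_mul]

lemma norm_le_one_of_proj {n : Type*} [Fintype n] [DecidableEq n] (P : Matrix n n ℂ)
    (h1 : Pᴴ = P) (h2 : P * P = P) : ‖P‖ ≤ 1 := by
  have h := Matrix.l2_opNorm_conjTranspose_mul_self P
  rw [h1, h2] at h
  nlinarith [norm_nonneg P]

lemma SwapF_mul_self (d : ℕ) : SwapF d * SwapF d = 1 := by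
  ext p q
  rw [Matrix.mul_apply]
  rw [Finset.sum_eq_single (p.2, p.1)]
  · have hfst : SwapF d p (p.2, p.1) = 1 := by simp [SwapF]
    rw [hfst, one_mul]
    simp only [SwapF, Matrix.of_apply, Matrix.one_apply, Prod.ext_iff]
    by_cases h1 : p.1 = q.1 <;> by_cases h2 : p.2 = q.2 <;> simp [h1, h2]
  · rintro ⟨r1, r2⟩ _ hr
    simp only [SwapF, Matrix.of_apply]
    by_cases h : p.1 = r2 ∧ p.2 = r1
    · exact absurd (Prod.ext h.2.symm h.1.symm) hr
    · simp [h]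
  · intro h
    exact absurd (Finset.mem_univ _) h

lemma SwapF_hermitian (d : ℕ) : (SwapF d)ᴴ = SwapF d := by
  ext p q
  simp only [Matrix.conjTranspose_apply, SwapF, Matrix.of_apply]
  by_cases h : q.1 = p.2 ∧ q.2 = p.1
  · have h' : p.1 = q.2 ∧ p.2 = q.1 := ⟨h.2.symm, h.1.symm⟩
    rw [if_pos h, if_pos h', star_one]
  · have h' : ¬(p.1 = q.2 ∧ p.2 = q.1) := fun hc => h ⟨hc.2.symm, hc.1.symm⟩
    rw [if_neg h, if_neg h', star_zero]

lemma PiSym_norm_le (d : ℕ) : ‖PiSym d‖ ≤ 1 := by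
  apply norm_le_one_of_proj
  · rw [PiSym, Matrix.conjTranspose_smul, Matrix.conjTranspose_add,
      Matrix.conjTranspose_one, SwapF_hermitian]
    norm_num
  · rw [PiSym, smul_mul_smul_comm, add_mul, one_mul, mul_add, mul_one,
      SwapF_mul_self]
    ext p q
    simp only [Matrix.smul_apply, Matrix.add_apply, smul_eq_mul]
    ring

lemma PiEPR_hermitian (d : ℕ) : (PiEPR d)ᴴ = PiEPR d := by
  ext p q
  simp only [Matrix.conjTranspose_apply, PiEPR, Matrix.of_apply]
  by_cases h : q.1 = q.2 <;> by_cases h' : p.1 = p.2 <;>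
    simp [h, h', And.comm, ← Complex.ofReal_natCast]

lemma PiEPR_idem (d : ℕ) (hd : 0 < d) : PiEPR d * PiEPR d = PiEPR d := by
  have hdc : (d : ℂ) ≠ 0 := Nat.cast_ne_zero.mpr hd.ne'
  ext p q
  rw [Matrix.mul_apply]
  have hterm : ∀ r : Fin d × Fin d, PiEPR d p r * PiEPR d r q =
      if p.1 = p.2 ∧ q.1 = q.2 ∧ r.1 = r.2 then 1 / (d:ℂ) * (1 / (d:ℂ)) else 0 := by
    intro r
    simp only [PiEPR, Matrix.of_apply]
    by_cases h1 : p.1 = p.2 <;> by_cases h2 : q.1 = q.2 <;> by_cases h3 : r.1 = r.2 <;>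
      simp [h1, h2, h3]
  rw [Finset.sum_congr rfl fun r _ => hterm r]
  simp only [PiEPR, Matrix.of_apply]
  by_cases h1 : p.1 = p.2 <;> by_cases h2 : q.1 = q.2 <;>
    simp only [h1, h2, true_and, false_and, and_false, if_false, if_true,
      Finset.sum_const_zero, and_self]
  have hdiag : (∑ r : Fin d × Fin d, if r.1 = r.2 then 1 / (d:ℂ) * (1 / (d:ℂ)) else 0)
      = (d : ℂ) * (1 / (d:ℂ) * (1 / (d:ℂ))) := by
    rw [Fintype.sum_prod_type]
    have hrow : ∀ r1 : Fin d, (∑ r2 : Fin d,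
        if ((r1, r2) : Fin d × Fin d).1 = ((r1, r2) : Fin d × Fin d).2
          then 1 / (d:ℂ) * (1 / (d:ℂ)) else 0) = 1 / (d:ℂ) * (1 / (d:ℂ)) := by
      intro r1
      simp
    rw [Finset.sum_congr rfl fun r1 _ => hrow r1, Finset.sum_const, Finset.card_univ]
    simp [nsmul_eq_mul]
  rw [hdiag]
  field_simp

lemma one_sub_PiEPR_norm_le (d : ℕ) (hd : 0 < d) : ‖(1 : Matrix (Fin d × Fin d) (Fin d × Fin d) ℂ) - PiEPR d‖ ≤ 1 := by
  apply norm_le_one_of_proj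
  · rw [Matrix.conjTranspose_sub, Matrix.conjTranspose_one, PiEPR_hermitian]
  · rw [sub_mul, one_mul, mul_sub, mul_one, PiEPR_idem d hd]
    abel

def ptEquiv (d : ℕ) : ((Fin d × Fin d) × (Fin d × Fin d)) ≃ ((Fin d × Fin d) × (Fin d × Fin d)) :=
  ⟨fun x => ((x.1.1, x.2.2), (x.2.1, x.1.2)), fun x => ((x.1.1, x.2.2), (x.2.1, x.1.2)),
   fun ⟨⟨a, b⟩, ⟨c, f⟩⟩ => rfl, fun ⟨⟨a, b⟩, ⟨c, f⟩⟩ => rfl⟩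

lemma frobSq_ptrans {d : ℕ} (E : Matrix (Fin d × Fin d) (Fin d × Fin d) ℂ) :
    frobSq (ptrans E) = frobSq E :=
  Fintype.sum_equiv (ptEquiv d) _ _ fun x => rfl

lemma ptrans_norm_le {d : ℕ} (hd : 0 < d) (E : Matrix (Fin d × Fin d) (Fin d × Fin d) ℂ) :
    ‖ptrans E‖ ≤ (d : ℝ) * ‖E‖ := by
  calc ‖ptrans E‖ ≤ Real.sqrt (frobSq (ptrans E)) := norm_le_sqrt_frobSq _
    _ = Real.sqrt (frobSq E) := by rw [frobSq_ptrans]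
    _ ≤ Real.sqrt ((Fintype.card (Fin d × Fin d) : ℝ) * ‖E‖ ^ 2) :=
        Real.sqrt_le_sqrt (frobSq_le_card_mul E)
    _ = (d : ℝ) * ‖E‖ := by
        rw [Fintype.card_prod, Fintype.card_fin]
        push_cast
        rw [show ((d:ℝ) * d) * ‖E‖ ^ 2 = ((d:ℝ) * ‖E‖) ^ 2 by ring]
        exact Real.sqrt_sq (mul_nonneg (Nat.cast_nonneg d) (norm_nonneg _))

end Helpers

lemma ptrans_key (d : ℕ) (hd : 0 < d) (M : Matrix (Fin d × Fin d) (Fin d × Fin d) ℂ) :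
    ptrans M - PiEPR d = ptrans (M - ((2 : ℂ) / ((d : ℂ) + 1)) • PiSym d)
      + ((1 : ℂ) / ((d : ℂ) + 1)) •
        ((1 : Matrix (Fin d × Fin d) (Fin d × Fin d) ℂ) - PiEPR d) := by
  have hdc : (d : ℂ) ≠ 0 := Nat.cast_ne_zero.mpr hd.ne'
  have hdc1 : (d : ℂ) + 1 ≠ 0 := by
    have : ((d + 1 : ℕ) : ℂ) ≠ 0 := Nat.cast_ne_zero.mpr (Nat.succ_ne_zero d)
    push_cast at this
    exact this
  ext p q
  simp only [ptrans, Matrix.sub_apply, Matrix.add_apply, Matrix.smul_apply, PiSym, PiEPR,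
    SwapF, Matrix.of_apply, Matrix.one_apply, smul_eq_mul, Prod.mk.injEq, Prod.ext_iff]
  split_ifs <;> first
    | tauto
    | (field_simp; try ring)

section Main
open scoped Matrix.Norms.L2Operator

theorem aux_twirl_bounds (d : ℕ) (hd : 0 < d)
    (M : Matrix (Fin d × Fin d) (Fin d × Fin d) ℂ)
    (hclose : opNorm (M - ((2 : ℂ) / ((d : ℂ) + 1)) • PiSym d) ≤ 1 / ((d : ℝ) * ((d : ℝ) + 1)))
    (l r : ℝ) (hl : 0 ≤ l) (hr : 0 ≤ r) :
    l * opNorm M + r * opNorm (ptrans M - PiEPR d) ≤ (3 * l + 2 * r) / ((d : ℝ) + 1) := by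
  have hd1 : (1 : ℝ) ≤ (d : ℝ) := by exact_mod_cast hd
  have hdpos : (0 : ℝ) < (d : ℝ) := by linarith
  have hdp1 : (0 : ℝ) < (d : ℝ) + 1 := by linarith
  rw [opNorm_eq] at hclose
  set E := M - ((2 : ℂ) / ((d : ℂ) + 1)) • PiSym d with hE
  have hs2 : ‖((2 : ℂ) / ((d : ℂ) + 1))‖ = 2 / ((d : ℝ) + 1) := by
    have h1 : ((2 : ℂ) / ((d : ℂ) + 1)) = (((2 / ((d : ℝ) + 1)) : ℝ) : ℂ) := by
      push_cast; ring
    rw [h1, Complex.norm_real, Real.norm_eq_abs, abs_of_nonneg (by positivity)]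
  have hs1 : ‖((1 : ℂ) / ((d : ℂ) + 1))‖ = 1 / ((d : ℝ) + 1) := by
    have h1 : ((1 : ℂ) / ((d : ℂ) + 1)) = (((1 / ((d : ℝ) + 1)) : ℝ) : ℂ) := by
      push_cast; ring
    rw [h1, Complex.norm_real, Real.norm_eq_abs, abs_of_nonneg (by positivity)]
  have hMnorm : ‖M‖ ≤ 3 / ((d : ℝ) + 1) := by
    have hM' : M = E + ((2 : ℂ) / ((d : ℂ) + 1)) • PiSym d := by
      rw [hE, sub_add_cancel]
    have key : 1 / ((d : ℝ) * ((d : ℝ) + 1)) ≤ 1 / ((d : ℝ) + 1) := by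
      apply one_div_le_one_div_of_le hdp1
      nlinarith
    calc ‖M‖ ≤ ‖E‖ + ‖((2 : ℂ) / ((d : ℂ) + 1)) • PiSym d‖ := by
          rw [hM'] at *; exact norm_add_le _ _
      _ ≤ 1 / ((d : ℝ) * ((d : ℝ) + 1)) + (2 / ((d : ℝ) + 1)) * 1 := by
          refine add_le_add hclose ?_
          rw [norm_smul, hs2]
          exact mul_le_mul_of_nonneg_left (PiSym_norm_le d) (by positivity)
      _ ≤ 3 / ((d : ℝ) + 1) := by
          have : (3 : ℝ) / ((d : ℝ) + 1) = 1 / ((d : ℝ) + 1) + (2 / ((d : ℝ) + 1)) * 1 := by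
            ring
          linarith
  have hTnorm : ‖ptrans M - PiEPR d‖ ≤ 2 / ((d : ℝ) + 1) := by
    rw [ptrans_key d hd M]
    calc ‖ptrans E + ((1 : ℂ) / ((d : ℂ) + 1)) •
          ((1 : Matrix (Fin d × Fin d) (Fin d × Fin d) ℂ) - PiEPR d)‖
        ≤ ‖ptrans E‖ + ‖((1 : ℂ) / ((d : ℂ) + 1)) •
          ((1 : Matrix (Fin d × Fin d) (Fin d × Fin d) ℂ) - PiEPR d)‖ := norm_add_le _ _
      _ ≤ (d : ℝ) * (1 / ((d : ℝ) * ((d : ℝ) + 1))) + (1 / ((d : ℝ) + 1)) * 1 := by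
          refine add_le_add ?_ ?_
          · exact (ptrans_norm_le hd E).trans
              (mul_le_mul_of_nonneg_left hclose (by positivity))
          · rw [norm_smul, hs1]
            exact mul_le_mul_of_nonneg_left (one_sub_PiEPR_norm_le d hd) (by positivity)
      _ = 2 / ((d : ℝ) + 1) := by
          field_simp
          ring
  rw [opNorm_eq, opNorm_eq]
  calc l * ‖M‖ + r * ‖ptrans M - PiEPR d‖
      ≤ l * (3 / ((d : ℝ) + 1)) + r * (2 / ((d : ℝ) + 1)) :=
        add_le_add (mul_le_mul_of_nonneg_left hMnorm hl)
          (mul_le_mul_of_nonneg_left hTnorm hr)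
    _ = (3 * l + 2 * r) / ((d : ℝ) + 1) := by ring

end Main


/-- if the twirl `M` of `Π^eq` against a Borel probability measure `ν` on `U(d)`
is `1/(d(d+1))`-close in operator norm to `(2/(d+1)) Π^sym`, then for all `ℓ, r ≥ 0`,
`ℓ‖M‖_op + r‖M^{T2} − Π^EPR‖_op ≤ (3ℓ + 2r)/(d+1)`. -/
theorem approx_design_twirl_bounds (d : ℕ) (hd : 0 < d)
    (ν : Measure (Matrix.unitaryGroup (Fin d) ℂ)) [IsProbabilityMeasure ν]
    (M : Matrix (Fin d × Fin d) (Fin d × Fin d) ℂ)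
    (hM : M = Matrix.of fun p q =>
        ∫ C : Matrix.unitaryGroup (Fin d) ℂ,
          ((((C : Matrix (Fin d) (Fin d) ℂ) ⊗ₖ (C : Matrix (Fin d) (Fin d) ℂ))ᴴ *
              PiEq d *
              ((C : Matrix (Fin d) (Fin d) ℂ) ⊗ₖ (C : Matrix (Fin d) (Fin d) ℂ))) p q) ∂ν)
    (hclose : opNorm (M - ((2 : ℂ) / ((d : ℂ) + 1)) • PiSym d) ≤ 1 / ((d : ℝ) * ((d : ℝ) + 1)))
    (l r : ℝ) (hl : 0 ≤ l) (hr : 0 ≤ r) :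
    l * opNorm M + r * opNorm (ptrans M - PiEPR d) ≤ (3 * l + 2 * r) / ((d : ℝ) + 1) := by
  exact aux_twirl_bounds d hd M hclose l r hl hr
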